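/- arXiv:1706.05095 — 2 statements merged into one kernel-verified Lean document; each statement's English description precedes it below -/
import Mathlib

section
/- Let α, β > 0 and (v, θ, ω) ∈ ℝ³ with H₁(v,θ,ω) > 0 and H₂(v,θ,ω) > 0. Set D' = 2ω² + α²v²/β² + 4αθ. Then D' > α²v²/β², and with s₁ = −1, s₂ ∈ {−1,1} satisfying s₂·v = −|v|, t₁ = (2ω − α|v|/β + √D')/(2α), t₂ = |v|/β, and t₃ = (−α|v|/β + √D')/(2α), one has t₁ > 0 and t₃ > 0, and the C2a final state from (v, θ, ω) equals (0, 0, 0). -/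
noncomputable def H1 (α v θ ω : ℝ) : ℝ := 2 * α * θ + ω * |ω|

noncomputable def H2 (α β v θ ω : ℝ) : ℝ := ω * |ω| / (2 * α) + θ + ω * |v| / β

/-- The C2a final state `(v_f, θ_f, ω_f)`. -/
noncomputable def c2aFinal (α β v θ ω t₁ t₂ t₃ s₁ s₂ : ℝ) : ℝ × ℝ × ℝ :=
  (v + s₂ * β * t₂,
   θ + ω * t₁ + s₁ * α * t₁ ^ 2 / 2 + (ω + s₁ * α * t₁) * (t₂ + t₃) - s₁ * α * t₃ ^ 2 / 2,
   ω + s₁ * α * t₁ - s₁ * α * t₃)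

/-!
The `ω`-equation forces `t₁ = t₃ + ω / α`; substituting this into the `θ`-equation leaves the
quadratic `α t₃² + α r t₃ - (ω² / (2α) + θ) = 0` with `r = |v| / β`, whose discriminant is `D'`,
so `t₃` is its positive root. `H₁ > 0` gives `D' > (α r)²`, i.e. `t₃ > 0`, while `t₁ > 0` amounts to
`√D' > α r - 2ω`: for `ω ≤ 0` this is `H₂ > 0`, for `ω > 0` it again follows from `H₁ > 0`.
-/

theorem mul_abs_le_sq (x : ℝ) : x * |x| ≤ x ^ 2 := by
  calc x * |x| ≤ |x| * |x| := mul_le_mul_of_nonneg_right (le_abs_self x) (abs_nonneg x)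
    _ = x ^ 2 := by rw [abs_mul_abs_self, sq]

theorem sq_lt_discriminant {α θ ω : ℝ} (hH1 : 0 < 2 * α * θ + ω * |ω|) (a : ℝ) :
    a ^ 2 < 2 * ω ^ 2 + a ^ 2 + 4 * α * θ := by
  linarith [mul_abs_le_sq ω]

theorem sub_two_mul_sq_lt_discriminant {α θ ω r : ℝ} (hα : 0 < α)
    (hH1 : 0 < 2 * α * θ + ω * |ω|) (hH2 : 0 < ω * |ω| / (2 * α) + θ + ω * r)
    (h : 2 * ω < α * r) :
    (α * r - 2 * ω) ^ 2 < 2 * ω ^ 2 + (α * r) ^ 2 + 4 * α * θ := by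
  rcases le_or_gt ω 0 with hω | hω
  · have hH2' : 0 < -ω ^ 2 + 2 * α * θ + 2 * α * (ω * r) := by
      have := mul_pos (by positivity : (0 : ℝ) < 2 * α) hH2
      rw [abs_of_nonpos hω] at this
      field_simp at this
      linarith
    nlinarith
  · rw [abs_of_pos hω] at hH1
    nlinarith [mul_pos hω (sub_pos.2 h)]

theorem two_mul_sub_add_sqrt_discriminant_pos {α θ ω r : ℝ} (hα : 0 < α) (hr : 0 ≤ r)
    (hH1 : 0 < 2 * α * θ + ω * |ω|) (hH2 : 0 < ω * |ω| / (2 * α) + θ + ω * r) :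
    0 < 2 * ω - α * r + √(2 * ω ^ 2 + (α * r) ^ 2 + 4 * α * θ) := by
  rcases le_or_gt (α * r) (2 * ω) with h | h
  · have := (Real.lt_sqrt (by positivity)).2 (sq_lt_discriminant hH1 (α * r))
    linarith [mul_nonneg hα.le hr]
  · have := (Real.lt_sqrt (by linarith)).2 (sub_two_mul_sq_lt_discriminant hα hH1 hH2 h)
    linarith

theorem add_mul_abs_eq_zero_of_mul_eq_neg_abs {s v : ℝ} (h : s * v = -|v|) :
    v + s * |v| = 0 := by
  rcases abs_cases v with ⟨hv, _⟩ | ⟨hv, _⟩ <;> rw [hv] at h ⊢ <;> linarith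

theorem c2aFinal_eq_zero {α β v θ ω S s₂ : ℝ} (hα : α ≠ 0) (hβ : β ≠ 0)
    (hS : S ^ 2 = 2 * ω ^ 2 + α ^ 2 * v ^ 2 / β ^ 2 + 4 * α * θ) (hs₂ : s₂ * v = -|v|) :
    c2aFinal α β v θ ω ((2 * ω - α * |v| / β + S) / (2 * α)) (|v| / β)
      ((-(α * |v| / β) + S) / (2 * α)) (-1) s₂ = (0, 0, 0) := by
  simp only [c2aFinal, Prod.mk.injEq]
  refine ⟨?_, ?_, ?_⟩
  · rw [mul_assoc, mul_div_cancel₀ _ hβ]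
    exact add_mul_abs_eq_zero_of_mul_eq_neg_abs hs₂
  · rw [← sq_abs v] at hS
    field_simp at hS ⊢
    linear_combination (-2) * hS
  · field_simp
    ring

theorem stmt2_general (α β v θ ω : ℝ) (hα : 0 < α) (hβ : 0 < β)
    (hH1 : H1 α v θ ω > 0) (hH2 : H2 α β v θ ω > 0)
    (D' : ℝ) (hD' : D' = 2 * ω ^ 2 + α ^ 2 * v ^ 2 / β ^ 2 + 4 * α * θ)
    (s₁ s₂ : ℝ) (hs₁ : s₁ = -1) (hs₂v : s₂ * v = -|v|)
    (t₁ t₂ t₃ : ℝ)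
    (ht₁ : t₁ = (2 * ω - α * |v| / β + Real.sqrt D') / (2 * α))
    (ht₂ : t₂ = |v| / β)
    (ht₃ : t₃ = (-(α * |v| / β) + Real.sqrt D') / (2 * α)) :
    D' > α ^ 2 * v ^ 2 / β ^ 2 ∧ 0 < t₁ ∧ 0 < t₃ ∧
    c2aFinal α β v θ ω t₁ t₂ t₃ s₁ s₂ = (0, 0, 0) := by
  have hr : 0 ≤ |v| / β := by positivity
  have ha : α * |v| / β = α * (|v| / β) := mul_div_assoc _ _ _
  have hsq : α ^ 2 * v ^ 2 / β ^ 2 = (α * (|v| / β)) ^ 2 := by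
    rw [mul_pow, div_pow, sq_abs, mul_div_assoc]
  have hD : D' = 2 * ω ^ 2 + (α * (|v| / β)) ^ 2 + 4 * α * θ := by rw [hD', hsq]
  have hgt : (α * (|v| / β)) ^ 2 < D' := hD ▸ sq_lt_discriminant hH1 _
  have hsqrt : α * (|v| / β) < √D' := (Real.lt_sqrt (by positivity)).2 hgt
  have hD0 : 0 ≤ D' := (sq_nonneg _).trans hgt.le
  refine ⟨hsq ▸ hgt, ?_, ?_, ?_⟩
  · rw [ht₁, ha, hD]
    rw [H2, mul_div_assoc ω |v| β] at hH2
    exact div_pos (two_mul_sub_add_sqrt_discriminant_pos hα hr hH1 hH2) (by positivity)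
  · rw [ht₃, ha]
    exact div_pos (by linarith) (by positivity)
  · rw [ht₁, ht₂, ht₃, hs₁]
    exact c2aFinal_eq_zero hα.ne' hβ.ne' ((Real.sq_sqrt hD0).trans hD') hs₂v

theorem stmt2 (α β v θ ω : ℝ) (hα : 0 < α) (hβ : 0 < β)
    (hH1 : H1 α v θ ω > 0) (hH2 : H2 α β v θ ω > 0)
    (D' : ℝ) (hD' : D' = 2 * ω ^ 2 + α ^ 2 * v ^ 2 / β ^ 2 + 4 * α * θ)
    (s₁ s₂ : ℝ) (hs₁ : s₁ = -1) (hs₂ : s₂ = -1 ∨ s₂ = 1) (hs₂v : s₂ * v = -|v|)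
    (t₁ t₂ t₃ : ℝ)
    (ht₁ : t₁ = (2 * ω - α * |v| / β + Real.sqrt D') / (2 * α))
    (ht₂ : t₂ = |v| / β)
    (ht₃ : t₃ = (-(α * |v| / β) + Real.sqrt D') / (2 * α)) :
    D' > α ^ 2 * v ^ 2 / β ^ 2 ∧ 0 < t₁ ∧ 0 < t₃ ∧
    c2aFinal α β v θ ω t₁ t₂ t₃ s₁ s₂ = (0, 0, 0) :=
  stmt2_general α β v θ ω hα hβ hH1 hH2 D' hD' s₁ s₂ hs₁ hs₂v t₁ t₂ t₃ ht₁ ht₂ ht₃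
end

section
/- Let α, β > 0 and (v, θ, ω) ∈ ℝ³ with H₁(v,θ,ω)·H₂(v,θ,ω) < 0. Set t₁ = β|ω|·H₂(v,θ,ω)/(αω|v|), t₂ = |v|/β, t₃ = |ω|/α − t₁, and let s₁, s₂ ∈ {−1,1} satisfy s₁·ω = −|ω| and s₂·v = −|v|. Then t₁ > 0, t₃ > 0, and the α-β-α (same-sign) final state from (v, θ, ω) with durations t₁, t₂, t₃ and signs s₁, s₂ equals (0, 0, 0). -/
/-- The α-β-α (same-sign) final state `(v_f, θ_f, ω_f)`: angular acceleration `s₁ * α`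
for time `t₁`, linear acceleration `s₂ * β` for time `t₂`, angular acceleration
`s₁ * α` for time `t₃`. -/
noncomputable def abaFinal (α β v θ ω t₁ t₂ t₃ s₁ s₂ : ℝ) : ℝ × ℝ × ℝ :=
  (v + s₂ * β * t₂,
   θ + ω * t₁ + s₁ * α * t₁ ^ 2 / 2 + (ω + s₁ * α * t₁) * (t₂ + t₃) + s₁ * α * t₃ ^ 2 / 2,
   ω + s₁ * α * (t₁ + t₃))

/-!
The two angular phases last `t₁ + t₃ = |ω|/α` in total and the linear phase `t₂ = |v|/β`, which
brings `ω` and `v` to rest. Expanding, the final angle is `H₂ + s₁ α t₁ t₂`, and `t₁` is exactly the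
time that cancels `H₂`. For the time constraints, `H₁ = 2α (H₂ − ω|v|/β)`; so with `x = ω H₂` and
`y = ω²|v|/β ≥ 0` the hypothesis `H₁ H₂ < 0` reads `(x − y) x < 0`, i.e. `0 < x < y`, which is
`0 < t₁ < |ω|/α`.
-/

lemma pos_and_lt_of_sub_mul_self_neg {x y : ℝ} (hy : 0 ≤ y) (h : (x - y) * x < 0) :
    0 < x ∧ x < y := by
  rcases lt_or_ge 0 x with hx | hx
  · exact ⟨hx, by nlinarith⟩
  · nlinarith

lemma mul_abs_eq_neg_of_mul_eq_neg_abs {s x : ℝ} (hs : s = -1 ∨ s = 1) (h : s * x = -|x|) :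
    s * |x| = -x := by
  rcases hs with rfl | rfl <;> linarith

section

variable {α β v θ ω : ℝ}

lemma H1_eq_two_mul_sub (hα : α ≠ 0) :
    H1 α v θ ω = 2 * α * (H2 α β v θ ω - ω * |v| / β) := by
  unfold H1 H2
  field_simp
  ring

lemma mul_H2_pos_and_lt (hα : 0 < α) (hβ : 0 < β) (h : H1 α v θ ω * H2 α β v θ ω < 0) :
    0 < ω * H2 α β v θ ω ∧ ω * H2 α β v θ ω < ω ^ 2 * |v| / β := by
  rw [H1_eq_two_mul_sub (β := β) hα.ne'] at h
  have hω : ω ≠ 0 := by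
    rintro rfl
    simp only [zero_mul, zero_div, sub_zero] at h
    nlinarith [mul_self_nonneg (H2 α β v θ 0)]
  apply pos_and_lt_of_sub_mul_self_neg (by positivity)
  have : 0 < ω ^ 2 / (2 * α) := by positivity
  calc (ω * H2 α β v θ ω - ω ^ 2 * |v| / β) * (ω * H2 α β v θ ω)
      = ω ^ 2 / (2 * α) * (2 * α * (H2 α β v θ ω - ω * |v| / β) * H2 α β v θ ω) := by
        field_simp
    _ < 0 := mul_neg_of_pos_of_neg this h

lemma ne_zero_of_H1_mul_H2_neg (hα : 0 < α) (hβ : 0 < β)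
    (h : H1 α v θ ω * H2 α β v θ ω < 0) : ω ≠ 0 ∧ v ≠ 0 := by
  obtain ⟨hpos, hlt⟩ := mul_H2_pos_and_lt hα hβ h
  refine ⟨left_ne_zero_of_mul hpos.ne', ?_⟩
  rintro rfl
  simp only [abs_zero, mul_zero, zero_div] at hlt
  exact hlt.not_gt hpos

lemma switchTime_pos_and_lt (hα : 0 < α) (hβ : 0 < β) (h : H1 α v θ ω * H2 α β v θ ω < 0) :
    0 < β * |ω| * H2 α β v θ ω / (α * ω * |v|) ∧
      β * |ω| * H2 α β v θ ω / (α * ω * |v|) < |ω| / α := by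
  obtain ⟨hpos, hlt⟩ := mul_H2_pos_and_lt hα hβ h
  obtain ⟨hω, hv⟩ := ne_zero_of_H1_mul_H2_neg hα hβ h
  have ht : β * |ω| * H2 α β v θ ω / (α * ω * |v|) =
      β * (ω * H2 α β v θ ω) / (α * |ω| * |v|) := by
    rw [div_eq_div_iff (by simp [*, hα.ne']) (by positivity)]
    linear_combination (α * β * H2 α β v θ ω * |v|) * abs_mul_abs_self ω
  rw [ht]
  refine ⟨by positivity, ?_⟩
  rw [div_lt_div_iff₀ (by positivity) hα]
  rw [lt_div_iff₀ hβ, ← sq_abs ω] at hlt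
  linarith [mul_lt_mul_of_pos_right hlt hα]

lemma abaFinal_eq_zero {t₁ t₂ t₃ s₁ s₂ : ℝ} (hα : α ≠ 0) (hβ : β ≠ 0) (hω : ω ≠ 0) (hv : v ≠ 0)
    (ht₁ : t₁ = β * |ω| * H2 α β v θ ω / (α * ω * |v|)) (ht₂ : t₂ = |v| / β)
    (ht₃ : t₃ = |ω| / α - t₁) (hs₁ : s₁ * |ω| = -ω) (hs₂ : s₂ * |v| = -v) :
    abaFinal α β v θ ω t₁ t₂ t₃ s₁ s₂ = (0, 0, 0) := by
  have hv' : |v| ≠ 0 := abs_ne_zero.mpr hv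
  have hswitch : s₁ * α * t₁ * t₂ = -H2 α β v θ ω := by
    rw [ht₁, ht₂]
    field_simp
    rw [hs₁]
    ring
  have hT : s₁ * α * (|ω| / α) = -ω := by
    rw [mul_assoc, mul_div_cancel₀ _ hα, hs₁]
  have hH2 : H2 α β v θ ω = ω * (|ω| / α) / 2 + θ + ω * t₂ := by
    rw [H2, ht₂]
    ring
  refine Prod.ext ?_ (Prod.ext ?_ ?_)
  · simp only [abaFinal, ht₂]
    rw [mul_assoc, mul_div_cancel₀ _ hβ, hs₂]
    ring
  · simp only [abaFinal, ht₃]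
    linear_combination (|ω| / α / 2) * hT + hswitch - hH2
  · simp only [abaFinal, ht₃]
    linear_combination hT

end

theorem stmt7 (α β v θ ω : ℝ) (hα : 0 < α) (hβ : 0 < β)
    (h : H1 α v θ ω * H2 α β v θ ω < 0)
    (t₁ t₂ t₃ : ℝ)
    (ht₁ : t₁ = β * |ω| * H2 α β v θ ω / (α * ω * |v|))
    (ht₂ : t₂ = |v| / β)
    (ht₃ : t₃ = |ω| / α - t₁)
    (s₁ s₂ : ℝ) (hs₁ : s₁ = -1 ∨ s₁ = 1) (hs₂ : s₂ = -1 ∨ s₂ = 1)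
    (hs₁ω : s₁ * ω = -|ω|) (hs₂v : s₂ * v = -|v|) :
    0 < t₁ ∧ 0 < t₃ ∧ abaFinal α β v θ ω t₁ t₂ t₃ s₁ s₂ = (0, 0, 0) := by
  obtain ⟨hω, hv⟩ := ne_zero_of_H1_mul_H2_neg hα hβ h
  obtain ⟨ht₁pos, ht₁lt⟩ := switchTime_pos_and_lt hα hβ h
  rw [← ht₁] at ht₁pos ht₁lt
  exact ⟨ht₁pos, ht₃ ▸ sub_pos.mpr ht₁lt,
    abaFinal_eq_zero hα.ne' hβ.ne' hω hv ht₁ ht₂ ht₃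
      (mul_abs_eq_neg_of_mul_eq_neg_abs hs₁ hs₁ω) (mul_abs_eq_neg_of_mul_eq_neg_abs hs₂ hs₂v)⟩
end
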